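/- Let x ∈ 𝔹 with F(x) ≠ 0 be such that ⟪d', F′(x) d'⟫ > 0 for every nonzero d' ∈ E with ⟪x, d'⟫ = 0, and let d be a Newton direction at x. Then ⟪A x^{m-1}, P_x d⟫ = ⟪F(x), d⟫ < 0; in particular d is a curve descent direction of φ at x. -/

import Mathlib

open scoped RealInnerProductSpace

noncomputable section

/-- Euclidean space `ℝ^n`. -/
abbrev Euc (n : ℕ) : Type := EuclideanSpace ℝ (Fin n)

/-- An `m`-th order tensor on `ℝ^n`, viewed as a continuous `m`-multilinear form. -/
abbrev Tensor (m n : ℕ) : Type := ContinuousMultilinearMap ℝ (fun _ : Fin m => Euc n) ℝ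

/-- A tensor is symmetric if it is invariant under every permutation of its arguments. -/
def IsSymmTensor {m n : ℕ} (A : Tensor m n) : Prop :=
  ∀ (e : Equiv.Perm (Fin m)) (v : Fin m → Euc n), A (v ∘ e) = A v

/-- `A x^m`, the homogeneous form `A (x, …, x)`. -/
def tpow {m n : ℕ} (A : Tensor m n) (x : Euc n) : ℝ := A (fun _ => x)

/-- The last index of `Fin m`. -/
def lastIdx {m : ℕ} (_hm : 2 ≤ m) : Fin m := ⟨m - 1, by omega⟩

/-- The second to last index of `Fin m`. -/
def sndIdx {m : ℕ} (_hm : 2 ≤ m) : Fin m := ⟨m - 2, by omega⟩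

lemma sndIdx_ne_lastIdx {m : ℕ} (hm : 2 ≤ m) : sndIdx hm ≠ lastIdx hm := by
  simp only [sndIdx, lastIdx, Fin.mk.injEq, ne_eq]
  omega

/-- `A x^{m-1}`: the unique vector with `⟪A x^{m-1}, v⟫ = A (x, …, x, v)` for all `v`. -/
def tvec {m n : ℕ} (A : Tensor m n) (hm : 2 ≤ m) (x : Euc n) : Euc n :=
  (InnerProductSpace.toDual ℝ (Euc n)).symm
    (A.toContinuousLinearMap (fun _ => x) (lastIdx hm))

/-- `F(x) = A x^{m-1} - (A x^m) • x`. -/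
def Fvec {m n : ℕ} (A : Tensor m n) (hm : 2 ≤ m) (x : Euc n) : Euc n :=
  tvec A hm x - tpow A x • x

/-- `φ(x) = (1/m) A x^m`. -/
def phi {m n : ℕ} (A : Tensor m n) (x : Euc n) : ℝ := (1 / (m : ℝ)) * tpow A x

/-- Orthogonal projection `P_x d = d - ⟪x, d⟫ x` (for `x` a unit vector). -/
def Pproj {n : ℕ} (x d : Euc n) : Euc n := d - ⟪x, d⟫ • x

/-- `x(α) = (x + α d)/‖x + α d‖`, the projection of `x + α d` onto the unit sphere. -/
def xcur {n : ℕ} (x d : Euc n) (α : ℝ) : Euc n := ‖x + α • d‖⁻¹ • (x + α • d)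

/-- `w(x, d)`: the unique vector with `⟪w(x, d), v⟫ = A (x, …, x, d, v)` for all `v`. -/
def wvec {m n : ℕ} (A : Tensor m n) (hm : 2 ≤ m) (x d : Euc n) : Euc n :=
  (InnerProductSpace.toDual ℝ (Euc n)).symm
    (A.toContinuousLinearMap (Function.update (fun _ => x) (sndIdx hm) d) (lastIdx hm))

/-- `A (x, …, x, d, d)`. -/
def A2 {m n : ℕ} (A : Tensor m n) (hm : 2 ≤ m) (x d : Euc n) : ℝ :=
  A (Function.update (Function.update (fun _ => x) (sndIdx hm) d) (lastIdx hm) d)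

lemma wvec_add {m n : ℕ} (A : Tensor m n) (hm : 2 ≤ m) (x d₁ d₂ : Euc n) :
    wvec A hm x (d₁ + d₂) = wvec A hm x d₁ + wvec A hm x d₂ := by
  unfold wvec
  rw [← map_add]
  congr 1
  ext v
  simp only [ContinuousMultilinearMap.toContinuousLinearMap_apply, ContinuousLinearMap.add_apply]
  rw [Function.update_comm (sndIdx_ne_lastIdx hm), Function.update_comm (sndIdx_ne_lastIdx hm),
    Function.update_comm (sndIdx_ne_lastIdx hm)]
  exact A.map_update_add _ _ _ _

lemma wvec_smul {m n : ℕ} (A : Tensor m n) (hm : 2 ≤ m) (x : Euc n) (c : ℝ) (d : Euc n) :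
    wvec A hm x (c • d) = c • wvec A hm x d := by
  unfold wvec
  rw [← map_smul]
  congr 1
  ext v
  simp only [ContinuousMultilinearMap.toContinuousLinearMap_apply,
    ContinuousLinearMap.smul_apply, smul_eq_mul]
  rw [Function.update_comm (sndIdx_ne_lastIdx hm), Function.update_comm (sndIdx_ne_lastIdx hm)]
  exact A.map_update_smul _ _ _ _

/-- The Jacobian `F'(x) d = (m-1) w(x,d) - (A x^m) d - m ⟪A x^{m-1}, d⟫ x`. -/
def FderivL {m n : ℕ} (A : Tensor m n) (hm : 2 ≤ m) (x : Euc n) : Euc n →L[ℝ] Euc n :=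
  LinearMap.toContinuousLinearMap
  { toFun := fun d =>
      ((m : ℝ) - 1) • wvec A hm x d - tpow A x • d - ((m : ℝ) * ⟪tvec A hm x, d⟫) • x
    map_add' := by
      intro d₁ d₂
      try simp only
      rw [wvec_add, inner_add_right]
      module
    map_smul' := by
      intro c d
      simp only [RingHom.id_apply]
      rw [wvec_smul, inner_smul_right]
      module }

/-- A Newton direction at `x`: `⟪x, d⟫ = 0` and `P_x (F'(x) d + F(x)) = 0`. -/
def NewtonDir {m n : ℕ} (A : Tensor m n) (hm : 2 ≤ m) (x d : Euc n) : Prop :=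
  ⟪x, d⟫ = 0 ∧ Pproj x (FderivL A hm x d + Fvec A hm x) = 0

/-- The residual function `θ(x) = (1/2)‖F(x)‖²`. -/
def theta {m n : ℕ} (A : Tensor m n) (hm : 2 ≤ m) (x : Euc n) : ℝ :=
  (1 / 2) * ‖Fvec A hm x‖ ^ 2

/-- Assumption (A): second-order sufficient condition at the KKT point `x̄`. -/
def AssumpA {m n : ℕ} (A : Tensor m n) (hm : 2 ≤ m) (xb : Euc n) (lam : ℝ) : Prop :=
  ‖xb‖ = 1 ∧ tvec A hm xb = lam • xb ∧ lam = tpow A xb ∧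
    ∀ d : Euc n, d ≠ 0 → ⟪xb, d⟫ = 0 →
      0 < ((m : ℝ) - 1) * A2 A hm xb d - lam * ‖d‖ ^ 2

end

/-!
Since `⟪x, d⟫ = 0`, pairing the Newton equation `P_x (F'(x) d + F(x)) = 0` with `d` removes the
projection and gives `⟪d, F'(x) d⟫ = -⟪F(x), d⟫`; positive definiteness on `x^⊥` makes this
negative, as `d ≠ 0` (otherwise `F(x) = P_x F(x) = 0`). For the descent property, the curve
`α ↦ x(α)` has velocity `P_x d` at `α = 0` and, by symmetry of `A`, `∇φ(x) = A x^{m-1}`, so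
`α ↦ φ(x(α))` has derivative `⟪A x^{m-1}, P_x d⟫ = ⟪F(x), d⟫ < 0` at `0`.
-/

open scoped Topology
open Filter Set

section Tensor

variable {m n : ℕ} (A : Tensor m n) (hm : 2 ≤ m)

lemma inner_tvec (x v : Euc n) :
    ⟪tvec A hm x, v⟫ = A (Function.update (fun _ => x) (lastIdx hm) v) := by
  simp [tvec, InnerProductSpace.toDual_symm_apply, ContinuousMultilinearMap.toContinuousLinearMap]

lemma inner_tvec_self (x : Euc n) : ⟪tvec A hm x, x⟫ = tpow A x := by
  rw [inner_tvec, Function.update_eq_self]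
  rfl

lemma inner_tvec_Pproj (x d : Euc n) : ⟪tvec A hm x, Pproj x d⟫ = ⟪Fvec A hm x, d⟫ := by
  rw [Pproj, Fvec, inner_sub_right, inner_sub_left, real_inner_smul_right, real_inner_smul_left,
    inner_tvec_self]
  ring

lemma inner_Fvec_eq_zero {x : Euc n} (hx : ‖x‖ = 1) : ⟪x, Fvec A hm x⟫ = 0 := by
  rw [Fvec, inner_sub_right, real_inner_smul_right, real_inner_comm, inner_tvec_self,
    real_inner_self_eq_norm_sq, hx]
  ring

variable {A}

lemma IsSymmTensor.apply_update (hA : IsSymmTensor A) (x v : Euc n) (i : Fin m) :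
    A (Function.update (fun _ => x) i v) = ⟪tvec A hm x, v⟫ := by
  rw [inner_tvec, ← hA (Equiv.swap i (lastIdx hm))]
  congr 1
  funext j
  simp only [Function.comp_apply, Function.update_apply, Equiv.swap_apply_def]
  split_ifs <;> simp_all

lemma IsSymmTensor.hasFDerivAt_tpow (hA : IsSymmTensor A) (x : Euc n) :
    HasFDerivAt (tpow A) ((m : ℝ) • innerSL ℝ (tvec A hm x)) x := by
  let diag : Euc n →L[ℝ] (Fin m → Euc n) := ContinuousLinearMap.pi fun _ => .id ℝ (Euc n)
  refine ((A.hasFDerivAt fun _ => x).comp x diag.hasFDerivAt).congr_fderiv ?_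
  ext d
  simp [diag, ContinuousMultilinearMap.linearDeriv_apply, hA.apply_update hm]

lemma IsSymmTensor.hasFDerivAt_phi (hA : IsSymmTensor A) (x : Euc n) :
    HasFDerivAt (phi A) (innerSL ℝ (tvec A hm x)) x := by
  have hm0 : (m : ℝ) ≠ 0 := by exact_mod_cast (by omega : m ≠ 0)
  refine ((hA.hasFDerivAt_tpow hm x).const_mul (1 / (m : ℝ))).congr_fderiv ?_
  rw [smul_smul, one_div_mul_cancel hm0, one_smul]

end Tensor

section Line

variable {E : Type*} [NormedAddCommGroup E]

lemma hasDerivAt_add_smul [NormedSpace ℝ E] (x d : E) : HasDerivAt (fun α : ℝ => x + α • d) d 0 := by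
  simpa using ((hasDerivAt_id (0 : ℝ)).smul_const d).const_add x

lemma hasDerivAt_norm_add_smul [InnerProductSpace ℝ E] {x : E} (hx : ‖x‖ = 1) (d : E) :
    HasDerivAt (fun α : ℝ => ‖x + α • d‖) ⟪x, d⟫ 0 := by
  have hsq := (hasDerivAt_add_smul x d).norm_sq.sqrt (by simp [hx])
  simp only [Real.sqrt_sq (norm_nonneg _)] at hsq
  convert hsq using 1
  simp [hx]

end Line

section Sphere

variable {n : ℕ} {x : Euc n}

lemma Pproj_eq_self {d : Euc n} (hd : ⟪x, d⟫ = 0) : Pproj x d = d := by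
  simp [Pproj, hd]

lemma inner_Pproj_right {d : Euc n} (hd : ⟪x, d⟫ = 0) (y : Euc n) :
    ⟪d, Pproj x y⟫ = ⟪d, y⟫ := by
  rw [Pproj, inner_sub_right, real_inner_smul_right, real_inner_comm x d, hd, mul_zero, sub_zero]

lemma xcur_zero (hx : ‖x‖ = 1) (d : Euc n) : xcur x d 0 = x := by
  simp [xcur, hx]

lemma hasDerivAt_xcur (hx : ‖x‖ = 1) (d : Euc n) : HasDerivAt (xcur x d) (Pproj x d) 0 := by
  have h := ((hasDerivAt_norm_add_smul hx d).inv (by simp [hx])).smul (hasDerivAt_add_smul x d)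
  refine h.congr_deriv ?_
  simp [Pproj, hx, sub_eq_add_neg]

end Sphere

lemma HasDerivAt.exists_Ioc_lt_of_neg {f : ℝ → ℝ} {f' a : ℝ} (hf : HasDerivAt f f' a)
    (hf' : f' < 0) : ∃ b > a, ∀ t ∈ Ioc a b, f t < f a := by
  have hslope : Tendsto (slope f a) (𝓝[>] a) (𝓝 f') :=
    (hasDerivWithinAt_iff_tendsto_slope' self_notMem_Ioi).mp hf.hasDerivWithinAt
  have hev : ∀ᶠ t in 𝓝[>] a, f t < f a := by
    filter_upwards [hslope.eventually (eventually_lt_nhds hf'), self_mem_nhdsWithin]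
      with t hneg (ht : a < t)
    have h := sub_smul_slope f a t
    rw [smul_eq_mul, vsub_eq_sub] at h
    linarith [mul_neg_of_pos_of_neg (sub_pos.mpr ht) hneg]
  exact mem_nhdsGT_iff_exists_Ioc_subset.mp hev

namespace NewtonDir

variable {m n : ℕ} {A : Tensor m n} {hm : 2 ≤ m} {x d : Euc n}

lemma ne_zero (hd : NewtonDir A hm x d) (hx : ‖x‖ = 1) (hF : Fvec A hm x ≠ 0) : d ≠ 0 := by
  rintro rfl
  have hP := hd.2
  rw [map_zero, zero_add, Pproj_eq_self (inner_Fvec_eq_zero A hm hx)] at hP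
  exact hF hP

lemma inner_FderivL (hd : NewtonDir A hm x d) :
    ⟪d, FderivL A hm x d⟫ = -⟪Fvec A hm x, d⟫ := by
  have h := inner_Pproj_right hd.1 (FderivL A hm x d + Fvec A hm x)
  rw [hd.2, inner_zero_right, inner_add_right, real_inner_comm (Fvec A hm x)] at h
  linarith

lemma inner_Fvec_neg (hd : NewtonDir A hm x d) (hx : ‖x‖ = 1) (hF : Fvec A hm x ≠ 0)
    (hpd : ∀ d' : Euc n, d' ≠ 0 → ⟪x, d'⟫ = 0 → 0 < ⟪d', FderivL A hm x d'⟫) :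
    ⟪Fvec A hm x, d⟫ < 0 := by
  have h := hpd d (hd.ne_zero hx hF) hd.1
  rw [hd.inner_FderivL] at h
  linarith

end NewtonDir

theorem stmt10_general {m n : ℕ} (hm : 2 ≤ m) (A : Tensor m n) (hA : IsSymmTensor A)
    (x : Euc n) (hx : ‖x‖ = 1) (hFx : Fvec A hm x ≠ 0)
    (hpd : ∀ d' : Euc n, d' ≠ 0 → ⟪x, d'⟫ = 0 → 0 < ⟪d', FderivL A hm x d'⟫)
    (d : Euc n) (hNd : NewtonDir A hm x d) :
    ⟪tvec A hm x, Pproj x d⟫ = ⟪Fvec A hm x, d⟫ ∧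
    ⟪Fvec A hm x, d⟫ < 0 ∧
    ∃ αbar > 0, ∀ α ∈ Set.Ioc (0 : ℝ) αbar, phi A (xcur x d α) < phi A x := by
  have hslope := inner_tvec_Pproj A hm x d
  have hneg := hNd.inner_Fvec_neg hx hFx hpd
  refine ⟨hslope, hneg, ?_⟩
  have hcurve := (hA.hasFDerivAt_phi hm x).comp_hasDerivAt_of_eq 0 (hasDerivAt_xcur hx d)
    (xcur_zero hx d).symm
  rw [innerSL_apply_apply, hslope] at hcurve
  simpa only [Function.comp_apply, xcur_zero hx] using hcurve.exists_Ioc_lt_of_neg hneg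

/-- at a non-eigenvector where `F'(x)` is positive definite on `x^⊥`, a Newton
direction satisfies `⟪A x^{m-1}, P_x d⟫ = ⟪F(x), d⟫ < 0` and is a curve descent direction
of `φ` at `x`. -/
theorem stmt10 {m n : ℕ} (hn : 1 ≤ n) (hm : 2 ≤ m) (A : Tensor m n) (hA : IsSymmTensor A)
    (x : Euc n) (hx : ‖x‖ = 1) (hFx : Fvec A hm x ≠ 0)
    (hpd : ∀ d' : Euc n, d' ≠ 0 → ⟪x, d'⟫ = 0 → 0 < ⟪d', FderivL A hm x d'⟫)
    (d : Euc n) (hNd : NewtonDir A hm x d) :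
    ⟪tvec A hm x, Pproj x d⟫ = ⟪Fvec A hm x, d⟫ ∧
    ⟪Fvec A hm x, d⟫ < 0 ∧
    ∃ αbar > 0, ∀ α ∈ Set.Ioc (0 : ℝ) αbar, phi A (xcur x d α) < phi A x :=
  stmt10_general hm A hA x hx hFx hpd d hNd
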